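/- Under the abstract kernel ridge regression setup, for every λ > 0 one has ‖(L + λI)^{1/2}(f⋄_λ − f_λ)‖_H ≤ Q_λ^2 P_λ. -/

import Mathlib

open ContinuousLinearMap

/-- `S` is the positive square root of the positive operator `T`. -/
def IsSqrtOf {E : Type*} [NormedAddCommGroup E] [InnerProductSpace ℝ E]
    [CompleteSpace E] (S T : E →L[ℝ] E) : Prop :=
  S.IsPositive ∧ S ∘L S = T

/-- `S` is the inverse `T⁻¹` of the operator `T`. -/
def IsInvOf {E : Type*} [NormedAddCommGroup E] [InnerProductSpace ℝ E]
    [CompleteSpace E] (S T : E →L[ℝ] E) : Prop :=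
  S ∘L T = 1 ∧ T ∘L S = 1

/-- `S` is the inverse square root `T^{-1/2}` of the positive invertible operator `T`,
i.e. `S` is positive and `S ∘ S = T⁻¹`. -/
def IsInvSqrtOf {E : Type*} [NormedAddCommGroup E] [InnerProductSpace ℝ E]
    [CompleteSpace E] (S T : E →L[ℝ] E) : Prop :=
  S.IsPositive ∧ IsInvOf (S ∘L S) T

/-- `p` is the family of real powers `t ↦ A ^ t` (for `t ≥ 0`) of the positive operator `A`,
given by the continuous functional calculus; it is characterized by the semigroup property
together with positivity, continuity, `p 0 = 1` and `p 1 = A`. -/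
def IsPowerFamilyOf {E : Type*} [NormedAddCommGroup E] [InnerProductSpace ℝ E]
    [CompleteSpace E] (A : E →L[ℝ] E) (p : ℝ → E →L[ℝ] E) : Prop :=
  p 0 = 1 ∧ p 1 = A ∧ (∀ s t : ℝ, 0 ≤ s → 0 ≤ t → p (s + t) = p s ∘L p t) ∧
    (∀ t : ℝ, 0 ≤ t → (p t).IsPositive) ∧ ContinuousOn p (Set.Ici (0 : ℝ))

/-!
Write `S = (L + λ)^{1/2}`, `T = (A + λ)^{-1/2}` and `w = y' - A f_ρ`, so that
`f⋄_λ - f_λ = -(A + λ)^{-1} w = -T² w`. Since `S² (L + λ)^{-1} = 1`,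
`S T² w = (S T) (T S) (S (L + λ)^{-1/2}) ((L + λ)^{-1/2} w)`.
Here `T S` is the adjoint of `S T`, so has the same norm, and `S (L + λ)^{-1/2}` is an isometry.
-/

theorem mul_mul_eq_one_of_mul_self_inverse {M : Type*} [Monoid M] {t m : M}
    (h₁ : t * t * m = 1) (h₂ : m * (t * t) = 1) : t * m * t = 1 := by
  have hcomm : t * m = m * t :=
    calc t * m = m * (t * t) * (t * m) := by rw [h₂, one_mul]
      _ = m * t * (t * t * m) := by noncomm_ring
      _ = m * t := by rw [h₁, mul_one]
  rw [hcomm, mul_assoc, h₂]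

theorem norm_mul_comm_of_isSelfAdjoint {R : Type*} [NonUnitalNormedRing R] [StarRing R]
    [NormedStarGroup R] {a b : R} (ha : IsSelfAdjoint a) (hb : IsSelfAdjoint b) :
    ‖a * b‖ = ‖b * a‖ := by
  rw [← norm_star, star_mul, ha.star_eq, hb.star_eq]

section SquareRoots

variable {E : Type*} [NormedAddCommGroup E] [InnerProductSpace ℝ E] [CompleteSpace E]
  {S T M : E →L[ℝ] E}

theorem IsInvOf.eq_comp_self_of_isInvSqrtOf {R : E →L[ℝ] E} (hR : IsInvOf R M)
    (hT : IsInvSqrtOf T M) : R = T ∘L T :=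
  left_inv_eq_right_inv (M := E →L[ℝ] E) hR.1 hT.2.2

theorem IsSqrtOf.norm_apply_apply_of_isInvSqrtOf (hS : IsSqrtOf S M) (hT : IsInvSqrtOf T M)
    (x : E) : ‖S (T x)‖ = ‖x‖ := by
  have hTMT : T * M * T = 1 := mul_mul_eq_one_of_mul_self_inverse hT.2.1 hT.2.2
  have hinner : inner ℝ (S (T x)) (S (T x)) = (inner ℝ x x : ℝ) := by
    calc inner ℝ (S (T x)) (S (T x)) = inner ℝ (T x) (S (S (T x))) :=
          hS.1.isSelfAdjoint.isSymmetric _ _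
      _ = inner ℝ x (T (S (S (T x)))) := hT.1.isSelfAdjoint.isSymmetric _ _
      _ = inner ℝ x ((T * (S ∘L S) * T) x) := rfl
      _ = inner ℝ x x := by rw [hS.2, hTMT, one_apply_eq_self]
  rw [real_inner_self_eq_norm_sq, real_inner_self_eq_norm_sq] at hinner
  exact (pow_left_inj₀ (norm_nonneg _) (norm_nonneg _) two_ne_zero).mp hinner

theorem IsSqrtOf.norm_apply_comp_self_apply_le {N U : E →L[ℝ] E} (hS : IsSqrtOf S M)
    (hU : IsInvSqrtOf U M) (hT : IsInvSqrtOf T N) (w : E) :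
    ‖S ((T ∘L T) w)‖ ≤ ‖S ∘L T‖ ^ 2 * ‖U w‖ := by
  have hfactor : S ((T ∘L T) w) = (S ∘L T) ((T ∘L S) (S (U (U w)))) := by
    have hw : S (S (U (U w))) = w := by
      change ((S ∘L S) ∘L (U ∘L U)) w = w
      rw [hS.2, hU.2.2, one_apply_eq_self]
    simp only [comp_apply, hw]
  have hadj : ‖T ∘L S‖ = ‖S ∘L T‖ :=
    norm_mul_comm_of_isSelfAdjoint hT.1.isSelfAdjoint hS.1.isSelfAdjoint
  calc ‖S ((T ∘L T) w)‖
      ≤ ‖S ∘L T‖ * (‖T ∘L S‖ * ‖S (U (U w))‖) := by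
        rw [hfactor]
        exact (le_opNorm _ _).trans (by gcongr; exact le_opNorm _ _)
    _ = ‖S ∘L T‖ ^ 2 * ‖U w‖ := by
        rw [hadj, hS.norm_apply_apply_of_isInvSqrtOf hU]; ring

end SquareRoots

theorem stmt4_general {H : Type*} [NormedAddCommGroup H] [InnerProductSpace ℝ H] [CompleteSpace H]
    (A L : H →L[ℝ] H)
    (frho : H)
    (y' : H) (lam : ℝ)
    (Rinv : H →L[ℝ] H) (hRinv : IsInvOf Rinv (A + lam • (1 : H →L[ℝ] H)))
    (SL : H →L[ℝ] H) (hSL : IsSqrtOf SL (L + lam • (1 : H →L[ℝ] H)))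
    (SAinv : H →L[ℝ] H) (hSAinv : IsInvSqrtOf SAinv (A + lam • (1 : H →L[ℝ] H)))
    (SLinv : H →L[ℝ] H) (hSLinv : IsInvSqrtOf SLinv (L + lam • (1 : H →L[ℝ] H))) :
    ‖SL (Rinv (A frho) - Rinv y')‖ ≤ ‖SL ∘L SAinv‖ ^ 2 * ‖SLinv (y' - A frho)‖ := by
  rw [hRinv.eq_comp_self_of_isInvSqrtOf hSAinv, ← map_sub, ← neg_sub, map_neg, map_neg,
    norm_neg]
  exact hSL.norm_apply_comp_self_apply_le hSLinv hSAinv _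

/-- In the abstract kernel ridge regression setup, for every `lam > 0`,
`‖(L + lam I)^{1/2}(f⋄_lam − f_lam)‖ ≤ Q_lam^2 P_lam`. -/
theorem stmt4 {H : Type*} [NormedAddCommGroup H] [InnerProductSpace ℝ H] [CompleteSpace H]
    [TopologicalSpace.SeparableSpace H]
    (A L : H →L[ℝ] H) (hA : A.IsPositive) (hL : L.IsPositive)
    (r : ℝ) (hr : 1 / 2 ≤ r) (hr1 : r ≤ 1)
    (pL : ℝ → H →L[ℝ] H) (hpL : IsPowerFamilyOf L pL)
    (h frho : H) (hfrho : frho = pL r h)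
    (y' : H) (lam : ℝ) (hlam : 0 < lam)
    (Rinv : H →L[ℝ] H) (hRinv : IsInvOf Rinv (A + lam • (1 : H →L[ℝ] H)))
    (SL : H →L[ℝ] H) (hSL : IsSqrtOf SL (L + lam • (1 : H →L[ℝ] H)))
    (SAinv : H →L[ℝ] H) (hSAinv : IsInvSqrtOf SAinv (A + lam • (1 : H →L[ℝ] H)))
    (SLinv : H →L[ℝ] H) (hSLinv : IsInvSqrtOf SLinv (L + lam • (1 : H →L[ℝ] H))) :
    ‖SL (Rinv (A frho) - Rinv y')‖ ≤ ‖SL ∘L SAinv‖ ^ 2 * ‖SLinv (y' - A frho)‖ :=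
  stmt4_general A L frho y' lam Rinv hRinv SL hSL SAinv hSAinv SLinv hSLinv
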